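/- Let f = [f₀, f₁, 0, 0] be a symmetric ternary function in 𝓜 (so f depends only on Hamming weight and vanishes on weights 2 and 3). If U = [[a,b],[0,d]] is an invertible upper triangular 2×2 complex matrix, then the holographic transform U∘f (given by applying U⊗U⊗U to the value vector of f) again lies in 𝓜. Conversely, if f₁ ≠ 0 and M is an invertible 2×2 matrix with M∘f ∈ 𝓜, then M is upper triangular. -/

import Mathlib

/-- Hamming weight of a Boolean tuple. -/
def wt {n : ℕ} (x : Fin n → Bool) : ℕ := (Finset.univ.filter (fun i => x i = true)).card

/-- `f` is a generalised matching function: it vanishes on inputs of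
Hamming weight greater than 1. -/
def InM {n : ℕ} (f : (Fin n → Bool) → ℂ) : Prop :=
  ∀ x : Fin n → Bool, 1 < wt x → f x = 0

/-- Holographic transformation of an `n`-ary function by a 2×2 matrix `M`
(rows/columns indexed by `Bool`, with `false = 0`, `true = 1`). -/
noncomputable def htrans {n : ℕ} (M : Bool → Bool → ℂ) (f : (Fin n → Bool) → ℂ) :
    (Fin n → Bool) → ℂ :=
  fun x => ∑ z : Fin n → Bool, f z * ∏ j, M (x j) (z j)

/-!
If `M(1,0) = 0`, the term of `z` in `(M∘f)(x)` vanishes unless `zⱼ = 1` wherever `xⱼ = 1`, so for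
`|x| ≥ 2` only points outside the support of `f ∈ 𝓜` could contribute. For the converse, `f ∈ 𝓜`
gives `(M∘f)(x) = f(0) ∏ⱼ M(xⱼ,0) + ∑ₖ f(eₖ) ∏ⱼ M(xⱼ,δⱼₖ)`. Writing `M = [[a,b],[c,d]]` and
`f = [f₀,f₁,0,0]`, the values of `M∘f` at `110` and `111` are `c(f₀ac + f₁(2ad + bc))` and
`c²(f₀c + 3f₁d)`; `a` times the second minus `c` times the first is `f₁c²(ad - bc)`, so `c = 0`.
-/

theorem InM.htrans_of_lower_left_eq_zero {n : ℕ} {f : (Fin n → Bool) → ℂ} (hf : InM f)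
    {U : Bool → Bool → ℂ} (hU : U true false = 0) : InM (htrans U f) := by
  intro x hx
  refine Finset.sum_eq_zero fun z _ => ?_
  by_cases hz : 1 < wt z
  · rw [hf z hz, zero_mul]
  obtain ⟨j, hxj, hzj⟩ : ∃ j, x j = true ∧ z j = false := by
    by_contra! h
    have : wt x ≤ wt z := Finset.card_le_card fun j => by simpa using h j
    omega
  rw [Finset.prod_eq_zero (Finset.mem_univ j) (by rw [hxj, hzj, hU]), mul_zero]

theorem eq_false_or_eq_decide_of_wt_le_one {n : ℕ} {z : Fin n → Bool} (hz : wt z ≤ 1) :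
    z = (fun _ => false) ∨ ∃ k, z = fun j => decide (j = k) := by
  by_cases h : ∃ k, z k = true
  · obtain ⟨k, hk⟩ := h
    refine Or.inr ⟨k, funext fun j => ?_⟩
    by_cases hj : j = k
    · simp [hj, hk]
    · have : z j ≠ true := fun hzj =>
        hj (Finset.card_le_one.mp hz j (by simpa using hzj) k (by simpa using hk))
      simpa [hj] using this
  · simp only [not_exists, Bool.not_eq_true] at h
    exact Or.inl (funext fun j => by simpa using h j)

theorem htrans_apply_of_InM {n : ℕ} {f : (Fin n → Bool) → ℂ} (hf : InM f)
    (M : Bool → Bool → ℂ) (x : Fin n → Bool) :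
    htrans M f x = f (fun _ => false) * ∏ j, M (x j) false +
      ∑ k, f (fun j => decide (j = k)) * ∏ j, M (x j) (decide (j = k)) := by
  classical
  set s := insert (fun _ => false) (Finset.univ.image fun (k : Fin n) j => decide (j = k))
  have hs : ∀ z ∉ s, 1 < wt z := fun z hz => by
    by_contra! h
    rcases eq_false_or_eq_decide_of_wt_le_one h with rfl | ⟨k, rfl⟩ <;> simp [s] at hz
  have h_false_notMem :
      (fun _ => false) ∉ Finset.univ.image fun (k : Fin n) j => decide (j = k) := by
    simp only [Finset.mem_image, Finset.mem_univ, true_and, not_exists]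
    exact fun k h => by simpa using congrFun h k
  have h_inj : Function.Injective fun (k : Fin n) j => decide (j = k) := fun k l h => by
    simpa using congrFun h k
  rw [htrans,
    ← Finset.sum_subset (Finset.subset_univ s) fun z _ hz => by rw [hf z (hs z hz), zero_mul],
    Finset.sum_insert h_false_notMem, Finset.sum_image fun k _ l _ h => h_inj h]

section Symmetric

variable {n : ℕ} {f₀ f₁ : ℂ} {f : (Fin n → Bool) → ℂ}

theorem inM_of_symmetric (hf : ∀ x, f x = if wt x = 0 then f₀ else if wt x = 1 then f₁ else 0) :
    InM f := fun x hx => by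
  rw [hf, if_neg (by omega), if_neg (by omega)]

theorem htrans_apply_of_symmetric
    (hf : ∀ x, f x = if wt x = 0 then f₀ else if wt x = 1 then f₁ else 0)
    (M : Bool → Bool → ℂ) (x : Fin n → Bool) :
    htrans M f x = f₀ * ∏ j, M (x j) false + f₁ * ∑ k, ∏ j, M (x j) (decide (j = k)) := by
  have h_wt_single (k : Fin n) : wt (fun j => decide (j = k)) = 1 := by
    simp [wt, Finset.filter_eq']
  have h_wt_false : wt (fun _ : Fin n => false) = 0 := by simp [wt]
  simp [htrans_apply_of_InM (inM_of_symmetric hf), hf, h_wt_false, h_wt_single, Finset.mul_sum]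

end Symmetric

/-- Let `f = [f₀,f₁,0,0]` be a symmetric ternary function in `𝓜`.
(1) If `U = [[a,b],[0,d]]` is invertible upper triangular, then `U∘f ∈ 𝓜`.
(2) Conversely, if `f₁ ≠ 0`, `M` is invertible and `M∘f ∈ 𝓜`, then `M` is
upper triangular. -/
theorem M_triangular (f₀ f₁ : ℂ) (f : (Fin 3 → Bool) → ℂ)
    (hf : ∀ x, f x = if wt x = 0 then f₀ else if wt x = 1 then f₁ else 0) :
    (∀ U : Bool → Bool → ℂ, U true false = 0 → U false false * U true true ≠ 0 →
      InM (htrans U f)) ∧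
    (f₁ ≠ 0 → ∀ M : Bool → Bool → ℂ,
      M false false * M true true - M false true * M true false ≠ 0 →
      InM (htrans M f) → M true false = 0) := by
  refine ⟨fun U hU _ => (inM_of_symmetric hf).htrans_of_lower_left_eq_zero hU,
    fun hf₁ M hdet hM => ?_⟩
  have h110 := hM ![true, true, false] (by decide)
  have h111 := hM ![true, true, true] (by decide)
  simp only [htrans_apply_of_symmetric hf, Fin.prod_univ_three, Fin.sum_univ_three, Fin.isValue,
    Matrix.cons_val_zero, Matrix.cons_val_one, Matrix.cons_val, decide_true, decide_false,
    Fin.reduceEq, one_ne_zero, zero_ne_one] at h110 h111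
  have h_mul_det :
      f₁ * M true false ^ 2 * (M false false * M true true - M false true * M true false) = 0 := by
    linear_combination M false false * h111 - M true false * h110
  simpa [hf₁, hdet] using h_mul_det
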